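/- Let H be a 3-uniform hypergraph containing a hyperedge {x₁, x₂, x₃}. Suppose there are four vertices, disjoint from {x₁,x₂,x₃}, spanning a complete graph K₄ whose six edges can be partitioned into three perfect matchings M₁, M₂, M₃ (each of size 2) such that Mᵢ ⊆ L(xᵢ) for i = 1,2,3, where L(xᵢ) is the link graph of xᵢ. Then H contains a copy of the Fano plane. -/

import Mathlib

/-- The lines of the Fano plane (projective plane over F₂) on seven points. -/
def fanoLines : Finset (Finset (Fin 7)) :=
  {{0, 1, 2}, {0, 3, 4}, {0, 5, 6}, {1, 3, 5}, {1, 4, 6}, {2, 3, 6}, {2, 4, 5}}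

/-- A 3-uniform hypergraph with hyperedge set `E` contains a copy of the Fano plane. -/
def ContainsFano {V : Type*} [DecidableEq V] (E : Set (Finset V)) : Prop :=
  ∃ f : Fin 7 → V, Function.Injective f ∧ ∀ l ∈ fanoLines, l.image f ∈ E

/-!
Send the points `0, …, 6` of the Fano plane to `x₁, x₂, x₃, y₁, y₂, y₃, y₄`. The line `{0, 1, 2}`
becomes the hyperedge `{x₁, x₂, x₃}`, and the six lines through exactly one of `0, 1, 2` become the
hyperedges `{xᵢ} ∪ e` with `e ∈ Mᵢ`: the three perfect matchings of `K₄` on the `yⱼ` play the role of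
the three parallel classes of the affine plane of order 2 obtained by deleting the line `{0, 1, 2}`.
-/

open Finset

theorem Fin.injective_of_card_image_univ {α : Type*} [DecidableEq α] {n : ℕ} {f : Fin n → α}
    (h : (univ.image f).card = n) : Function.Injective f := by
  rw [← Set.injOn_univ, ← coe_univ]
  exact injOn_of_card_image_eq (by simpa using h)

theorem stmt_9_general {V : Type*} [DecidableEq V] (E : Set (Finset V))
    (x₁ x₂ x₃ y₁ y₂ y₃ y₄ : V)
    (hcard : ({x₁, x₂, x₃, y₁, y₂, y₃, y₄} : Finset V).card = 7)
    (hedge : ({x₁, x₂, x₃} : Finset V) ∈ E)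
    (hM1a : ({x₁, y₁, y₂} : Finset V) ∈ E) (hM1b : ({x₁, y₃, y₄} : Finset V) ∈ E)
    (hM2a : ({x₂, y₁, y₃} : Finset V) ∈ E) (hM2b : ({x₂, y₂, y₄} : Finset V) ∈ E)
    (hM3a : ({x₃, y₁, y₄} : Finset V) ∈ E) (hM3b : ({x₃, y₂, y₃} : Finset V) ∈ E) :
    ContainsFano E := by
  refine ⟨![x₁, x₂, x₃, y₁, y₂, y₃, y₄], Fin.injective_of_card_image_univ ?_, ?_⟩
  · have himage : univ.image ![x₁, x₂, x₃, y₁, y₂, y₃, y₄] = {x₁, x₂, x₃, y₁, y₂, y₃, y₄} := by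
      ext
      simp [Fin.exists_fin_succ, eq_comm]
    rwa [himage]
  · intro l hl
    fin_cases hl <;> simpa [image_insert]

theorem stmt_9 {V : Type*} [DecidableEq V] (E : Set (Finset V))
    (h3 : ∀ e ∈ E, e.card = 3) (x₁ x₂ x₃ y₁ y₂ y₃ y₄ : V)
    (hcard : ({x₁, x₂, x₃, y₁, y₂, y₃, y₄} : Finset V).card = 7)
    (hedge : ({x₁, x₂, x₃} : Finset V) ∈ E)
    (hM1a : ({x₁, y₁, y₂} : Finset V) ∈ E) (hM1b : ({x₁, y₃, y₄} : Finset V) ∈ E)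
    (hM2a : ({x₂, y₁, y₃} : Finset V) ∈ E) (hM2b : ({x₂, y₂, y₄} : Finset V) ∈ E)
    (hM3a : ({x₃, y₁, y₄} : Finset V) ∈ E) (hM3b : ({x₃, y₂, y₃} : Finset V) ∈ E) :
    ContainsFano E :=
  stmt_9_general E x₁ x₂ x₃ y₁ y₂ y₃ y₄ hcard hedge hM1a hM1b hM2a hM2b hM3a hM3b
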